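/- Let μ > 0, let φ₀(ξ) = (4πμ)^{−1/2} e^{−ξ²/(4μ)}, and for n ∈ ℕ let φ_n be the n-th derivative of φ₀. Then for every n ∈ ℕ and every ξ ∈ ℝ, μ φ_n''(ξ) + (1/2)(φ_n(ξ) + ξ φ_n'(ξ)) = −(n/2) φ_n(ξ); that is, φ_n is an eigenfunction of the operator L_μ with eigenvalue −n/2. -/

import Mathlib

/-!
Differentiating `L_μ f = μ f'' + (f + ξ f')/2` gives `(L_μ f)' = L_μ f' + f'/2`, so differentiation
maps an eigenfunction of `L_μ` with eigenvalue `λ` to one with eigenvalue `λ - 1/2`. The Gaussian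
satisfies `φ₀' = -(ξ / 2μ) φ₀`, from which `L_μ φ₀ = 0`; induction on `n` gives the eigenvalue `-n/2`.
-/

/-- The Gaussian `φ₀(ξ) = (4πμ)^{−1/2} e^{−ξ²/(4μ)}`. -/
noncomputable def phi0 (μ ξ : ℝ) : ℝ :=
  (Real.sqrt (4 * Real.pi * μ))⁻¹ * Real.exp (-ξ ^ 2 / (4 * μ))

open scoped ContDiff

/-- The operator `L_μ`. -/
noncomputable def selfSimilarHeatOp (μ : ℝ) (f : ℝ → ℝ) (ξ : ℝ) : ℝ :=
  μ * deriv (deriv f) ξ + 1 / 2 * (f ξ + ξ * deriv f ξ)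

theorem hasDerivAt_selfSimilarHeatOp {μ : ℝ} {f : ℝ → ℝ} (hf : ContDiff ℝ 3 f) (ξ : ℝ) :
    HasDerivAt (selfSimilarHeatOp μ f)
      (selfSimilarHeatOp μ (deriv f) ξ + 1 / 2 * deriv f ξ) ξ := by
  have hd (m : ℕ) (hm : m < 3) : HasDerivAt (deriv^[m] f) (deriv^[m + 1] f ξ) ξ := by
    rw [Function.iterate_succ_apply', ← iteratedDeriv_eq_iterate]
    exact (hf.differentiable_iteratedDeriv m (mod_cast hm) ξ).hasDerivAt
  have h : HasDerivAt (fun x => μ * deriv (deriv f) x + 1 / 2 * (f x + x * deriv f x)) _ ξ :=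
    ((hd 2 (by norm_num)).const_mul μ).add
      (((hd 0 (by norm_num)).add ((hasDerivAt_id' ξ).mul (hd 1 (by norm_num)))).const_mul (1 / 2))
  refine h.congr_deriv ?_
  simp only [selfSimilarHeatOp, Function.iterate_succ_apply', Function.iterate_zero_apply]
  ring

theorem selfSimilarHeatOp_deriv_eq_of_eq_smul {μ c : ℝ} {f : ℝ → ℝ} (hf : ContDiff ℝ 3 f)
    (heig : selfSimilarHeatOp μ f = c • f) :
    selfSimilarHeatOp μ (deriv f) = (c - 1 / 2) • deriv f := by
  funext ξ
  have h := (hasDerivAt_selfSimilarHeatOp (μ := μ) hf ξ).deriv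
  rw [heig, deriv_const_smul c (hf.differentiable (by norm_num) ξ)] at h
  simp only [Pi.smul_apply, smul_eq_mul] at h ⊢
  linarith

theorem contDiff_phi0 (μ : ℝ) : ContDiff ℝ ∞ (phi0 μ) :=
  contDiff_const.mul (Real.contDiff_exp.comp ((contDiff_id.pow 2).neg.div_const _))

theorem hasDerivAt_phi0 (μ ξ : ℝ) : HasDerivAt (phi0 μ) (-(ξ / (2 * μ)) * phi0 μ ξ) ξ := by
  have h : HasDerivAt
      (fun x => (Real.sqrt (4 * Real.pi * μ))⁻¹ * Real.exp (-x ^ 2 / (4 * μ))) _ ξ :=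
    ((hasDerivAt_pow 2 ξ).neg.div_const (4 * μ)).exp.const_mul _
  refine h.congr_deriv ?_
  simp only [phi0]
  norm_num
  ring

theorem deriv_phi0 (μ : ℝ) : deriv (phi0 μ) = fun ξ => -(ξ / (2 * μ)) * phi0 μ ξ :=
  funext fun ξ => (hasDerivAt_phi0 μ ξ).deriv

theorem selfSimilarHeatOp_phi0 {μ : ℝ} (hμ : μ ≠ 0) : selfSimilarHeatOp μ (phi0 μ) = 0 := by
  funext ξ
  have h : HasDerivAt (fun x => -(x / (2 * μ)) * phi0 μ x) _ ξ :=
    ((hasDerivAt_id' ξ).div_const (2 * μ)).neg.mul (hasDerivAt_phi0 μ ξ)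
  simp only [selfSimilarHeatOp, deriv_phi0, h.deriv, Pi.neg_apply, Pi.zero_apply]
  field_simp
  ring

/-- for every `n ∈ ℕ`, the `n`-th derivative `φ_n = ∂_ξ^n φ₀` satisfies
`μ φ_n'' + (1/2)(φ_n + ξ φ_n') = −(n/2) φ_n`, i.e. `φ_n` is an eigenfunction of `L_μ`
with eigenvalue `−n/2`. -/
theorem stmt6 (μ : ℝ) (hμ : 0 < μ) :
    ∀ n : ℕ, ∀ ξ : ℝ,
      μ * deriv (deriv (iteratedDeriv n (phi0 μ))) ξ
          + 1 / 2 * (iteratedDeriv n (phi0 μ) ξ + ξ * deriv (iteratedDeriv n (phi0 μ)) ξ)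
        = -((n : ℝ) / 2) * iteratedDeriv n (phi0 μ) ξ := by
  suffices h : ∀ n : ℕ, selfSimilarHeatOp μ (iteratedDeriv n (phi0 μ))
      = (-((n : ℝ) / 2)) • iteratedDeriv n (phi0 μ) from fun n ξ => congrFun (h n) ξ
  intro n
  induction n with
  | zero => simpa using selfSimilarHeatOp_phi0 hμ.ne'
  | succ n ih =>
    have hsmooth : ContDiff ℝ 3 (iteratedDeriv n (phi0 μ)) := by
      rw [iteratedDeriv_eq_iterate]
      exact ((contDiff_phi0 μ).iterate_deriv n).of_le (WithTop.coe_le_coe.mpr le_top)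
    rw [iteratedDeriv_succ, selfSimilarHeatOp_deriv_eq_of_eq_smul hsmooth ih]
    congr 1
    push_cast
    ring
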